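/- Let ζ = e^{2πi/11}. The complex number 3 - (1-ζ²)^{-1} - (1-ζ⁴)^{-1} - (1-ζ⁵)^{-1} is not real. -/
import Mathlib


open Complex

lemma aux_im_pos {θ : ℝ} (h0 : 0 < θ) (h1 : θ < Real.pi) :
    0 < ((1 - Complex.exp (θ * Complex.I))⁻¹).im := by
  have hsin : 0 < Real.sin θ := Real.sin_pos_of_pos_of_lt_pi h0 h1
  have him : (1 - Complex.exp (θ * Complex.I)).im = -Real.sin θ := by
    simp [Complex.exp_ofReal_mul_I_im]
  have hne : (1 - Complex.exp (θ * Complex.I)) ≠ 0 := by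
    intro h
    rw [h] at him
    simp at him
    linarith
  have hsq : 0 < Complex.normSq (1 - Complex.exp (θ * Complex.I)) :=
    Complex.normSq_pos.mpr hne
  rw [Complex.inv_im, him, neg_neg]
  exact div_pos hsin hsq

lemma aux_pow (k : ℕ) :
    Complex.exp (2 * Real.pi * Complex.I / 11) ^ k =
      Complex.exp ((2 * Real.pi * k / 11 : ℝ) * Complex.I) := by
  rw [← Complex.exp_nat_mul]
  congr 1
  push_cast
  ring

/-- For `ζ = e^{2πi/11}`, the Atiyah–Bott character value
`3 - (1-ζ²)⁻¹ - (1-ζ⁴)⁻¹ - (1-ζ⁵)⁻¹` is not a real number. -/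
theorem atiyah_bott_value_not_real :
    ((3 : ℂ) - (1 - Complex.exp (2 * Real.pi * Complex.I / 11) ^ 2)⁻¹
      - (1 - Complex.exp (2 * Real.pi * Complex.I / 11) ^ 4)⁻¹
      - (1 - Complex.exp (2 * Real.pi * Complex.I / 11) ^ 5)⁻¹).im ≠ 0 := by
  have hpi := Real.pi_pos
  rw [aux_pow 2, aux_pow 4, aux_pow 5]
  have h2 : 0 < ((1 - Complex.exp ((2 * Real.pi * 2 / 11 : ℝ) * Complex.I))⁻¹).im :=
    aux_im_pos (by positivity) (by nlinarith)
  have h4 : 0 < ((1 - Complex.exp ((2 * Real.pi * 4 / 11 : ℝ) * Complex.I))⁻¹).im :=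
    aux_im_pos (by positivity) (by nlinarith)
  have h5 : 0 < ((1 - Complex.exp ((2 * Real.pi * 5 / 11 : ℝ) * Complex.I))⁻¹).im :=
    aux_im_pos (by positivity) (by nlinarith)
  have h3 : (3 : ℂ).im = 0 := by norm_num
  simp only [Complex.sub_im, h3]
  linarith
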